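/- For every behavior policy μ ∈ Λ, every time step t, and every state s, the conditional variance of the PDIS return admits the succinct form Var(G^PDIS(τ^{μ_{t:T−1}}_{t:T−1}) | S_t = s) = Σ_{a : μ_t(a|s)>0} μ_t(a|s)·(π_t(a|s)/μ_t(a|s))²·r̃_t(s,a) − v_{π,t}(s)², where r̃_t is the extended reward computed with continuation policy μ_{t+1:T−1}. -/
import Mathlib


open Finset

section MDPDefs

variable {S A : Type} [Fintype S] [Fintype A]

/-- State value `v_{π,t}(s)` of policy `π` for reward `r`, with `n` remaining steps at
time `t`; the paper's `v_{π,t}(s)` (horizon `T`) is `vval p r π (T − t) t s`. -/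
noncomputable def vval (p : S → A → S → ℝ) (r : S → A → ℝ) (π : ℕ → S → A → ℝ) :
    ℕ → ℕ → S → ℝ
  | 0, _, _ => 0
  | n + 1, t, s => ∑ a, π t s a * (r s a + ∑ s', p s a s' * vval p r π n (t + 1) s')

/-- Action value `q_{π,t}(s,a) = r(s,a) + ∑_{s'} p(s'|s,a) v_{π,t+1}(s')`, where `n`
steps remain after the current one; the paper's `q_{π,t}` is `qval p r π (T − t − 1) t`. -/
noncomputable def qval (p : S → A → S → ℝ) (r : S → A → ℝ) (π : ℕ → S → A → ℝ)
    (n t : ℕ) (s : S) (a : A) : ℝ :=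
  r s a + ∑ s', p s a s' * vval p r π n (t + 1) s'

/-- `ν_{π,t}(s,a) = Var_{s' ∼ p(·|s,a)}(v_{π,t+1}(s'))`, with `n = T − t − 1`
remaining steps after the current one (in particular `ν_{π,T−1} ≡ 0` since `v_{π,T} ≡ 0`). -/
noncomputable def nuVar (p : S → A → S → ℝ) (r : S → A → ℝ) (π : ℕ → S → A → ℝ)
    (n t : ℕ) (s : S) (a : A) : ℝ :=
  (∑ s', p s a s' * (vval p r π n (t + 1) s') ^ 2)
    - (∑ s', p s a s' * vval p r π n (t + 1) s') ^ 2

/-- Probability, under behavior policy `μ`, of the trajectory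
`τ = (A_t, S_{t+1}, A_{t+1}, …, S_{t+n})` of `n` steps starting from state `s` at
time `t`: actions `A_k ∼ μ_k(·|S_k)` and states `S_{k+1} ∼ p(·|S_k, A_k)`. -/
noncomputable def trajProb (p : S → A → S → ℝ) (μ : ℕ → S → A → ℝ) :
    (n : ℕ) → ℕ → S → (Fin n → A × S) → ℝ
  | 0, _, _, _ => 1
  | n + 1, t, s, τ =>
      μ t s (τ 0).1 * p s (τ 0).1 (τ 0).2 *
        trajProb p μ n (t + 1) (τ 0).2 (fun i => τ i.succ)

/-- PDIS return `G^PDIS(τ^{μ_{t:t+n−1}}_{t:t+n−1}) = ∑_{k=t}^{t+n−1} (∏_{j=t}^{k} ρ_j) R_{k+1}`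
(in its equivalent recursive form) along trajectory `τ` from state `s` at time `t`,
where `ρ_j = π_j(A_j|S_j)/μ_j(A_j|S_j)` and `R_{k+1} = r(S_k, A_k)`. -/
noncomputable def pdis (r : S → A → ℝ) (π μ : ℕ → S → A → ℝ) :
    (n : ℕ) → ℕ → S → (Fin n → A × S) → ℝ
  | 0, _, _, _ => 0
  | n + 1, t, s, τ =>
      π t s (τ 0).1 / μ t s (τ 0).1 *
        (r s (τ 0).1 + pdis r π μ n (t + 1) (τ 0).2 (fun i => τ i.succ))

/-- Conditional expectation `E[f(τ) | S_t = s]` over `n`-step trajectories generated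
by the behavior policy `μ` from state `s` at time `t`. -/
noncomputable def expTraj (p : S → A → S → ℝ) (μ : ℕ → S → A → ℝ) (n t : ℕ) (s : S)
    (f : (Fin n → A × S) → ℝ) : ℝ :=
  ∑ τ : Fin n → A × S, trajProb p μ n t s τ * f τ

/-- Conditional variance `Var(G^PDIS(τ^{μ_{t:T−1}}_{t:T−1}) | S_t = s)` with
`n = T − t` remaining steps. -/
noncomputable def pdisVar (p : S → A → S → ℝ) (r : S → A → ℝ) (π μ : ℕ → S → A → ℝ)
    (n t : ℕ) (s : S) : ℝ :=
  expTraj p μ n t s (fun τ => (pdis r π μ n t s τ) ^ 2)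
    - (expTraj p μ n t s (pdis r π μ n t s)) ^ 2

/-- Conditional variance `Var(G^PDIS(τ^{μ_{t+1:T−1}}_{t+1:T−1}) | S_t = s, A_t = a)`,
where `S_{t+1} ∼ p(·|s,a)` and then the trajectory is generated by `μ` from `S_{t+1}`;
here `n = T − t − 1`. -/
noncomputable def pdisVarSA (p : S → A → S → ℝ) (r : S → A → ℝ) (π μ : ℕ → S → A → ℝ)
    (n t : ℕ) (s : S) (a : A) : ℝ :=
  (∑ s', p s a s' * expTraj p μ n (t + 1) s' (fun τ => (pdis r π μ n (t + 1) s' τ) ^ 2))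
    - (∑ s', p s a s' * expTraj p μ n (t + 1) s' (pdis r π μ n (t + 1) s')) ^ 2

/-- Extended reward `r̃_t(s,a)` (horizon `T`) computed with continuation behavior
policy `μ`: `r̃_{T−1}(s,a) = r(s,a)²`, and for `t ≤ T−2`,
`r̃_t(s,a) = ν_{π,t}(s,a) + q_{π,t}(s,a)² + ∑_{s'} p(s'|s,a) Var(G^PDIS(τ^{μ_{t+1:T−1}}) | S_{t+1} = s')`. -/
noncomputable def rtilde (p : S → A → S → ℝ) (r : S → A → ℝ) (π μ : ℕ → S → A → ℝ)
    (T t : ℕ) (s : S) (a : A) : ℝ :=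
  if t + 1 = T then (r s a) ^ 2
  else
    nuVar p r π (T - t - 1) t s a + (qval p r π (T - t - 1) t s a) ^ 2
      + ∑ s', p s a s' * pdisVar p r π μ (T - t - 1) (t + 1) s'

/-- Total (unconditional) variance `Var(G^PDIS(τ^{μ_{0:T−1}}_{0:T−1}))` of the PDIS
estimator, including the randomness of the initial state `S_0 ∼ p0`. -/
noncomputable def pdisTotalVar (p : S → A → S → ℝ) (r : S → A → ℝ) (π μ : ℕ → S → A → ℝ)
    (p0 : S → ℝ) (T : ℕ) : ℝ :=
  (∑ s, p0 s * expTraj p μ T 0 s (fun τ => (pdis r π μ T 0 s τ) ^ 2))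
    - (∑ s, p0 s * expTraj p μ T 0 s (pdis r π μ T 0 s)) ^ 2

/-- Feasible set of the step-wise constrained problem at time `t` and state `s`:
probability distributions `ν` on `A` satisfying the coverage condition
`ν a = 0 → π_t(a|s) q_{π,t}(s,a) = 0` and the safety constraint
`∑ a, ν a * q^c_{μ*,t}(s,a) ≤ (1 + ε) v^c_{π,t}(s)`. -/
noncomputable def stepFeasible (p : S → A → S → ℝ) (r c : S → A → ℝ)
    (π μstar : ℕ → S → A → ℝ) (T : ℕ) (ε : ℝ) (t : ℕ) (s : S) : Set (A → ℝ) :=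
  {ν | (∀ a, 0 ≤ ν a) ∧ (∑ a, ν a) = 1 ∧
    (∀ a, ν a = 0 → π t s a * qval p r π (T - t - 1) t s a = 0) ∧
    (∑ a, ν a * qval p c μstar (T - t - 1) t s a) ≤ (1 + ε) * vval p c π (T - t) t s}

/-- Objective `∑_{a : ν a > 0} π_t(a|s)² r̃_t(s,a) / ν a` of the step-wise constrained
problem at time `t` and state `s`, where `r̃_t` is computed with continuation policy
`μ*_{t+1:T−1}`. -/
noncomputable def stepObj (p : S → A → S → ℝ) (r : S → A → ℝ) (π μstar : ℕ → S → A → ℝ)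
    (T t : ℕ) (s : S) (ν : A → ℝ) : ℝ :=
  ∑ a ∈ Finset.univ.filter (fun a => 0 < ν a),
    (π t s a) ^ 2 * rtilde p r π μstar T t s a / ν a

end MDPDefs

section AuxLemmas

set_option linter.unusedSectionVars false

variable {S A : Type} [Fintype S] [Fintype A]

lemma sum_fn_succ {β : Type} [Fintype β] {n : ℕ} (g : (Fin (n+1) → β) → ℝ) :
    ∑ τ : Fin (n+1) → β, g τ = ∑ x : β, ∑ τ : Fin n → β, g (Fin.cons x τ) := by
  rw [← (Fin.consEquiv (fun _ : Fin (n+1) => β)).sum_comp g, Fintype.sum_prod_type]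
  rfl

lemma trajProb_cons (p : S → A → S → ℝ) (μ : ℕ → S → A → ℝ) (n t : ℕ) (s : S)
    (a : A) (s' : S) (τ : Fin n → A × S) :
    trajProb p μ (n+1) t s (Fin.cons (a, s') τ)
      = μ t s a * p s a s' * trajProb p μ n (t+1) s' τ := by
  simp [trajProb]

lemma pdis_cons (r : S → A → ℝ) (π μ : ℕ → S → A → ℝ) (n t : ℕ) (s : S)
    (a : A) (s' : S) (τ : Fin n → A × S) :
    pdis r π μ (n+1) t s (Fin.cons (a, s') τ)
      = π t s a / μ t s a * (r s a + pdis r π μ n (t+1) s' τ) := by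
  simp [pdis]

lemma expTraj_succ (p : S → A → S → ℝ) (μ : ℕ → S → A → ℝ) (n t : ℕ) (s : S)
    (f : (Fin (n+1) → A × S) → ℝ) :
    expTraj p μ (n+1) t s f
      = ∑ a, μ t s a * ∑ s', p s a s' *
          expTraj p μ n (t+1) s' (fun τ => f (Fin.cons (a, s') τ)) := by
  unfold expTraj
  rw [sum_fn_succ, Fintype.sum_prod_type]
  refine Finset.sum_congr rfl fun a _ => ?_
  rw [Finset.mul_sum]
  refine Finset.sum_congr rfl fun s' _ => ?_
  rw [Finset.mul_sum, Finset.mul_sum]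
  refine Finset.sum_congr rfl fun τ _ => ?_
  rw [trajProb_cons]; ring

lemma expTraj_congr (p : S → A → S → ℝ) (μ : ℕ → S → A → ℝ) (n t : ℕ) (s : S)
    {f g : (Fin n → A × S) → ℝ} (h : ∀ τ, f τ = g τ) :
    expTraj p μ n t s f = expTraj p μ n t s g := by
  unfold expTraj
  exact Finset.sum_congr rfl fun τ _ => by rw [h]

lemma expTraj_add (p : S → A → S → ℝ) (μ : ℕ → S → A → ℝ) (n t : ℕ) (s : S)
    (f g : (Fin n → A × S) → ℝ) :
    expTraj p μ n t s (fun τ => f τ + g τ)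
      = expTraj p μ n t s f + expTraj p μ n t s g := by
  simp [expTraj, mul_add, Finset.sum_add_distrib]

lemma expTraj_smul (p : S → A → S → ℝ) (μ : ℕ → S → A → ℝ) (n t : ℕ) (s : S)
    (c : ℝ) (f : (Fin n → A × S) → ℝ) :
    expTraj p μ n t s (fun τ => c * f τ) = c * expTraj p μ n t s f := by
  simp only [expTraj, Finset.mul_sum]
  exact Finset.sum_congr rfl fun τ _ => by ring

lemma trajProb_sum (p : S → A → S → ℝ) (μ : ℕ → S → A → ℝ)
    (hp : ∀ s a, (∀ s', 0 ≤ p s a s') ∧ (∑ s', p s a s') = 1)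
    (hμ : ∀ t s, (∀ a, 0 ≤ μ t s a) ∧ (∑ a, μ t s a) = 1) :
    ∀ n t (s : S), ∑ τ : Fin n → A × S, trajProb p μ n t s τ = 1 := by
  intro n
  induction n with
  | zero => intro t s; simp [trajProb]
  | succ n ih =>
    intro t s
    rw [sum_fn_succ, Fintype.sum_prod_type]
    have h1 : ∀ (a : A) (s' : S),
        (∑ τ : Fin n → A × S, trajProb p μ (n+1) t s (Fin.cons (a, s') τ))
          = μ t s a * p s a s' := by
      intro a s'
      simp only [trajProb_cons, ← Finset.mul_sum, ih (t+1) s', mul_one]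
    simp only [h1]
    calc (∑ a, ∑ s', μ t s a * p s a s')
        = ∑ a, μ t s a * ∑ s', p s a s' := by
          exact Finset.sum_congr rfl fun a _ => (Finset.mul_sum _ _ _).symm
      _ = ∑ a, μ t s a := Finset.sum_congr rfl fun a _ => by rw [(hp s a).2, mul_one]
      _ = 1 := (hμ t s).2

lemma expTraj_const (p : S → A → S → ℝ) (μ : ℕ → S → A → ℝ)
    (hp : ∀ s a, (∀ s', 0 ≤ p s a s') ∧ (∑ s', p s a s') = 1)
    (hμ : ∀ t s, (∀ a, 0 ≤ μ t s a) ∧ (∑ a, μ t s a) = 1)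
    (n t : ℕ) (s : S) (c : ℝ) :
    expTraj p μ n t s (fun _ => c) = c := by
  simp only [expTraj, ← Finset.sum_mul, trajProb_sum p μ hp hμ n t s, one_mul]

lemma pdis_unbiased (T : ℕ)
    (p : S → A → S → ℝ) (r : S → A → ℝ) (π μ : ℕ → S → A → ℝ)
    (hp : ∀ s a, (∀ s', 0 ≤ p s a s') ∧ (∑ s', p s a s') = 1)
    (hπ : ∀ t s, (∀ a, 0 ≤ π t s a) ∧ (∑ a, π t s a) = 1)
    (hμ : ∀ t s, (∀ a, 0 ≤ μ t s a) ∧ (∑ a, μ t s a) = 1)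
    (hΛ : ∀ t, t < T → ∀ s a, μ t s a = 0 → π t s a * qval p r π (T - t - 1) t s a = 0) :
    ∀ n t (s : S), t + n = T →
      expTraj p μ n t s (pdis r π μ n t s) = vval p r π n t s := by
  intro n
  induction n with
  | zero => intro t s _; simp [expTraj, pdis, vval]
  | succ n ih =>
    intro t s htn
    rw [expTraj_succ]
    have key : ∀ a : A,
        (μ t s a * ∑ s', p s a s' *
          expTraj p μ n (t+1) s' (fun τ => pdis r π μ (n+1) t s (Fin.cons (a, s') τ)))
          = π t s a * qval p r π n t s a := by
      intro a
      have hinner : ∀ s' : S,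
          expTraj p μ n (t+1) s' (fun τ => pdis r π μ (n+1) t s (Fin.cons (a, s') τ))
            = π t s a / μ t s a * (r s a + vval p r π n (t+1) s') := by
        intro s'
        rw [expTraj_congr p μ n (t+1) s' (fun τ => pdis_cons r π μ n t s a s' τ),
          expTraj_smul]
        congr 1
        rw [show (fun τ => r s a + pdis r π μ n (t+1) s' τ)
            = (fun τ => (fun _ => r s a) τ + pdis r π μ n (t+1) s' τ) from rfl,
          expTraj_add, expTraj_const p μ hp hμ, ih (t+1) s' (by omega)]
      simp only [hinner]
      by_cases hμa : μ t s a = 0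
      · have hq : π t s a * qval p r π n t s a = 0 := by
          have := hΛ t (by omega) s a hμa
          rwa [show T - t - 1 = n from by omega] at this
        rw [hμa, hq, zero_mul]
      · have : (∑ s', p s a s' * (π t s a / μ t s a * (r s a + vval p r π n (t+1) s')))
            = π t s a / μ t s a * ∑ s', p s a s' * (r s a + vval p r π n (t+1) s') := by
          rw [Finset.mul_sum]; exact Finset.sum_congr rfl fun s' _ => by ring
        rw [this]
        have hsum : (∑ s', p s a s' * (r s a + vval p r π n (t+1) s'))
            = qval p r π n t s a := by
          simp only [mul_add, Finset.sum_add_distrib, ← Finset.sum_mul, (hp s a).2,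
            one_mul, qval]
        rw [hsum]
        field_simp
    rw [Finset.sum_congr rfl fun a _ => key a]
    have hall : ∀ a : A, a ∈ Finset.univ → π t s a * qval p r π n t s a
        = π t s a * (r s a + ∑ s', p s a s' * vval p r π n (t+1) s') := by
      intro a _; rfl
    rw [Finset.sum_congr rfl hall]
    rfl

end AuxLemmas

/-- **Succinct form of the conditional variance of the PDIS return.**
For every behavior policy `μ ∈ Λ`, every time step `t ∈ {0,…,T−1}` and every state `s`,
`Var(G^PDIS(τ^{μ_{t:T−1}}) | S_t = s)
  = ∑_{a : μ_t(a|s)>0} μ_t(a|s) (π_t(a|s)/μ_t(a|s))² r̃_t(s,a) − v_{π,t}(s)²`,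
where the extended reward `r̃_t` is computed with continuation policy `μ_{t+1:T−1}`. -/
theorem pdis_variance_succinct
    {S A : Type} [Fintype S] [Fintype A]
    (T : ℕ) (hT : 1 ≤ T)
    (p : S → A → S → ℝ) (r : S → A → ℝ) (π μ : ℕ → S → A → ℝ)
    (hp : ∀ s a, (∀ s', 0 ≤ p s a s') ∧ (∑ s', p s a s') = 1)
    (hπ : ∀ t s, (∀ a, 0 ≤ π t s a) ∧ (∑ a, π t s a) = 1)
    (hμ : ∀ t s, (∀ a, 0 ≤ μ t s a) ∧ (∑ a, μ t s a) = 1)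
    (hΛ : ∀ t, t < T → ∀ s a, μ t s a = 0 → π t s a * qval p r π (T - t - 1) t s a = 0) :
    ∀ t, t < T → ∀ s : S,
      pdisVar p r π μ (T - t) t s
        = (∑ a ∈ Finset.univ.filter (fun a => 0 < μ t s a),
            μ t s a * (π t s a / μ t s a) ^ 2 * rtilde p r π μ T t s a)
          - (vval p r π (T - t) t s) ^ 2 := by
  intro t ht s
  obtain ⟨n, hn⟩ : ∃ n, T - t = n + 1 := ⟨T - t - 1, by omega⟩
  have htn : t + (n + 1) = T := by omega
  rw [hn]
  unfold pdisVar
  rw [pdis_unbiased T p r π μ hp hπ hμ hΛ (n+1) t s htn]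
  congr 1
  have hne : ∀ a ∈ (Finset.univ : Finset A),
      μ t s a * (π t s a / μ t s a) ^ 2 * rtilde p r π μ T t s a ≠ 0 → 0 < μ t s a := by
    intro a _ h
    rcases ((hμ t s).1 a).lt_or_eq with h' | h'
    · exact h'
    · exact absurd (by rw [← h', zero_mul, zero_mul]) h
  rw [Finset.sum_filter_of_ne hne, expTraj_succ]
  have key : ∀ a : A,
      (μ t s a * ∑ s', p s a s' *
        expTraj p μ n (t+1) s' (fun τ => (pdis r π μ (n+1) t s (Fin.cons (a, s') τ))^2))
        = μ t s a * (π t s a / μ t s a) ^ 2 * rtilde p r π μ T t s a := by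
    intro a
    rw [mul_assoc]
    congr 1
    have h1 : ∀ s' : S,
        expTraj p μ n (t+1) s' (fun τ => (pdis r π μ (n+1) t s (Fin.cons (a, s') τ))^2)
          = (π t s a / μ t s a)^2 *
            expTraj p μ n (t+1) s' (fun τ => (r s a + pdis r π μ n (t+1) s' τ)^2) := by
      intro s'
      rw [expTraj_congr p μ n (t+1) s'
        (f := fun τ => (pdis r π μ (n+1) t s (Fin.cons (a, s') τ))^2)
        (g := fun τ => (π t s a / μ t s a)^2 * (r s a + pdis r π μ n (t+1) s' τ)^2)
        (fun τ => by show pdis r π μ (n+1) t s (Fin.cons (a, s') τ) ^ 2 = _; rw [pdis_cons]; ring), expTraj_smul]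
    simp only [h1]
    have h2 : (∑ s', p s a s' * ((π t s a / μ t s a)^2 *
        expTraj p μ n (t+1) s' (fun τ => (r s a + pdis r π μ n (t+1) s' τ)^2)))
        = (π t s a / μ t s a)^2 * ∑ s', p s a s' *
          expTraj p μ n (t+1) s' (fun τ => (r s a + pdis r π μ n (t+1) s' τ)^2) := by
      rw [Finset.mul_sum]; exact Finset.sum_congr rfl fun s' _ => by ring
    rw [h2]
    congr 1
    -- remaining: ∑ s', p s a s' * E[(r + G')²] = rtilde
    have hE : ∀ s' : S,
        expTraj p μ n (t+1) s' (fun τ => (r s a + pdis r π μ n (t+1) s' τ)^2)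
          = (r s a)^2 + (2 * r s a * vval p r π n (t+1) s'
            + expTraj p μ n (t+1) s' (fun τ => (pdis r π μ n (t+1) s' τ)^2)) := by
      intro s'
      rw [expTraj_congr p μ n (t+1) s'
        (f := fun τ => (r s a + pdis r π μ n (t+1) s' τ)^2)
        (g := fun τ => (fun _ => (r s a)^2) τ
          + (2 * r s a * pdis r π μ n (t+1) s' τ + (pdis r π μ n (t+1) s' τ)^2))
        (fun τ => by show (r s a + pdis r π μ n (t+1) s' τ)^2 = _; ring), expTraj_add, expTraj_add, expTraj_smul,
        expTraj_const p μ hp hμ,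
        pdis_unbiased T p r π μ hp hπ hμ hΛ n (t+1) s' (by omega)]
    simp only [hE, mul_add, Finset.sum_add_distrib]
    rw [show (∑ s', p s a s' * (r s a)^2) = (r s a)^2 from by
      rw [← Finset.sum_mul, (hp s a).2, one_mul]]
    rw [show (∑ s', p s a s' * (2 * r s a * vval p r π n (t+1) s'))
        = 2 * r s a * ∑ s', p s a s' * vval p r π n (t+1) s' from by
      rw [Finset.mul_sum]; exact Finset.sum_congr rfl fun s' _ => by ring]
    by_cases hT : t + 1 = T
    · have hn0 : n = 0 := by omega
      subst hn0
      rw [rtilde, if_pos hT]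
      simp [expTraj, pdis, vval]
    · rw [rtilde, if_neg hT, show T - t - 1 = n from by omega]
      have hvar : ∀ s' : S, pdisVar p r π μ n (t+1) s'
          = expTraj p μ n (t+1) s' (fun τ => (pdis r π μ n (t+1) s' τ)^2)
            - (vval p r π n (t+1) s')^2 := by
        intro s'
        unfold pdisVar
        rw [pdis_unbiased T p r π μ hp hπ hμ hΛ n (t+1) s' (by omega)]
      simp only [hvar, nuVar, qval, mul_sub, Finset.sum_sub_distrib]
      ring
  rw [Finset.sum_congr rfl fun a _ => key a]
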